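/- arXiv:2401.10033 — 2 statements merged into one kernel-verified Lean document; each statement's English description precedes it below -/
import Mathlib

section
/- Let R be a commutative ring and t, u be standard ring terms over R with the same carrier, S[t] = S[u]. Then t and u are f-equivalent. -/
/-- Ring terms over a commutative ring `R`. -/
inductive RingTerm (R : Type*) where
  | X : ℕ → RingTerm R
  | C : R → RingTerm R
  | zero : RingTerm R
  | one : RingTerm R
  | add : RingTerm R → RingTerm R → RingTerm R
  | mul : RingTerm R → RingTerm R → RingTerm R

namespace RingTerm

variable {R : Type*} [CommRing R]

/-- The evaluation map `Ψ` into multivariate polynomials. -/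
noncomputable def psi : RingTerm R → MvPolynomial ℕ R
  | X i => MvPolynomial.X i
  | C r => MvPolynomial.C r
  | zero => 0
  | one => 1
  | add t u => psi t + psi u
  | mul t u => psi t * psi u

/-- One-step elementary transformation: the twelve rules ET−1 … ET10,
closed under the term-forming operations (compatible closure). -/
inductive Step : RingTerm R → RingTerm R → Prop where
  | etm1 : Step zero (C 0)
  | et0 : Step one (C 1)
  | et1 (r s : R) : Step (add (C r) (C s)) (C (r + s))
  | et2 (r s : R) : Step (mul (C r) (C s)) (C (r * s))
  | et3 (u : RingTerm R) : Step (add zero u) u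
  | et4 (u : RingTerm R) : Step (mul one u) u
  | et5 (u u' : RingTerm R) : Step (add u u') (add u' u)
  | et6 (u u' : RingTerm R) : Step (mul u u') (mul u' u)
  | et7 (u u' u'' : RingTerm R) : Step (add u (add u' u'')) (add (add u u') u'')
  | et8 (u u' u'' : RingTerm R) : Step (mul u (mul u' u'')) (mul (mul u u') u'')
  | et9 (u u' u'' : RingTerm R) :
      Step (mul u (add u' u'')) (add (mul u u') (mul u u''))
  | et10 (u : RingTerm R) : Step (mul zero u) zero
  | addLeft {t t' : RingTerm R} (u : RingTerm R) :
      Step t t' → Step (add t u) (add t' u)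
  | addRight (u : RingTerm R) {t t' : RingTerm R} :
      Step t t' → Step (add u t) (add u t')
  | mulLeft {t t' : RingTerm R} (u : RingTerm R) :
      Step t t' → Step (mul t u) (mul t' u)
  | mulRight (u : RingTerm R) {t t' : RingTerm R} :
      Step t t' → Step (mul u t) (mul u t')

/-- f-equivalence: the equivalence closure of the one-step transformation. -/
def FEq (t u : RingTerm R) : Prop := Relation.EqvGen Step t u

end RingTerm

namespace RingTerm

variable {R : Type*}

/-- The number of occurrences of the variable `X i` in a term. -/
def varCount : RingTerm R → ℕ → ℕ
  | X j, i => if j = i then 1 else 0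
  | C _, _ => 0
  | zero, _ => 0
  | one, _ => 0
  | add t u, i => varCount t i + varCount u i
  | mul t u, i => varCount t i + varCount u i

/-- A term built only from variables and the binary symbol `·`. -/
def MulOnly : RingTerm R → Prop
  | X _ => True
  | mul t u => MulOnly t ∧ MulOnly u
  | _ => False

/-- An `m̄`-monomial: a term built only from variables and `·` in which each
variable `X i` occurs exactly `m̄ i` times; for `m̄ = 0` it is the term `1`. -/
def IsMonomial (m : ℕ →₀ ℕ) (t : RingTerm R) : Prop :=
  (m = 0 ∧ t = one) ∨ (MulOnly t ∧ ∀ i, varCount t i = m i)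

/-- Nonempty iterated sums: `IsSumOfPos l s` holds iff `s` is obtained from a
term built only from variables (each occurring exactly once) and `+` by
substituting the terms of the multiset `l` for the variables. -/
inductive IsSumOfPos : Multiset (RingTerm R) → RingTerm R → Prop where
  | single (t : RingTerm R) : IsSumOfPos {t} t
  | add {l l' : Multiset (RingTerm R)} {s s' : RingTerm R} :
      IsSumOfPos l s → IsSumOfPos l' s' → IsSumOfPos (l + l') (add s s')

/-- `s` is a sum of the terms in the multiset `l`; for `l = 0` the unique sum
is the term `0`. -/
def IsSumOf (l : Multiset (RingTerm R)) (s : RingTerm R) : Prop :=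
  (l = 0 ∧ s = zero) ∨ IsSumOfPos l s

end RingTerm

namespace RingTerm

/-- `t` is a standard ring term with carrier `p`: `t` is a sum of terms
`C (r i) · μ i`, `i = 1, …, N`, where the `r i` are nonzero and the `μ i` are
`m̄ i`-monomials with pairwise distinct exponent vectors, and
`p = Σ_i monomial (m̄ i) (r i)`. -/
noncomputable def IsStandardWithCarrier {R : Type*} [CommRing R]
    (t : RingTerm R) (p : MvPolynomial ℕ R) : Prop :=
  ∃ (N : ℕ) (r : Fin N → R) (m : Fin N → (ℕ →₀ ℕ)) (μ : Fin N → RingTerm R),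
    (∀ i, r i ≠ 0) ∧ Function.Injective m ∧
    (∀ i, IsMonomial (m i) (μ i)) ∧
    IsSumOf (Multiset.map (fun i => mul (C (r i)) (μ i)) Finset.univ.val) t ∧
    p = ∑ i : Fin N, MvPolynomial.monomial (m i) (r i)

end RingTerm

/-! Terms modulo f-equivalence form a commutative semiring: the rules ET3–ET10 are exactly its
axioms (up to commutativity), and ET−1, ET0, ET1, ET2 make `r ↦ [C r]` a ring homomorphism
from `R`. Evaluating polynomials there at `X i ↦ [X i]` sends `psi t` back to the class of `t`,
so terms with the same image under `psi` are f-equivalent; and `psi` maps a standard term to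
its carrier. -/

namespace RingTerm

variable {R : Type*} [CommRing R]

variable (R) in
/-- Taken as `Quot Step` rather than a quotient by `FEq`, so that `add` and `mul` descend by the
compatibility rules alone; `Quot.eqvGen_exact` recovers `FEq`. -/
def FQuotient : Type _ := Quot (Step (R := R))

namespace FQuotient

def mk (t : RingTerm R) : FQuotient R := Quot.mk _ t

instance : Zero (FQuotient R) := ⟨mk zero⟩
instance : One (FQuotient R) := ⟨mk one⟩
instance : Add (FQuotient R) :=
  ⟨Quot.map₂ add (fun u _ _ => .addRight u) (fun _ _ u => .addLeft u)⟩
instance : Mul (FQuotient R) :=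
  ⟨Quot.map₂ mul (fun u _ _ => .mulRight u) (fun _ _ u => .mulLeft u)⟩

instance : CommSemiring (FQuotient R) where
  add_assoc := by rintro ⟨a⟩ ⟨b⟩ ⟨c⟩; exact (Quot.sound (.et7 a b c)).symm
  zero_add := by rintro ⟨a⟩; exact Quot.sound (.et3 a)
  add_zero := by rintro ⟨a⟩; exact (Quot.sound (.et5 a zero)).trans (Quot.sound (.et3 a))
  add_comm := by rintro ⟨a⟩ ⟨b⟩; exact Quot.sound (.et5 a b)
  mul_assoc := by rintro ⟨a⟩ ⟨b⟩ ⟨c⟩; exact (Quot.sound (.et8 a b c)).symm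
  one_mul := by rintro ⟨a⟩; exact Quot.sound (.et4 a)
  mul_one := by rintro ⟨a⟩; exact (Quot.sound (.et6 a one)).trans (Quot.sound (.et4 a))
  zero_mul := by rintro ⟨a⟩; exact Quot.sound (.et10 a)
  mul_zero := by rintro ⟨a⟩; exact (Quot.sound (.et6 a zero)).trans (Quot.sound (.et10 a))
  mul_comm := by rintro ⟨a⟩ ⟨b⟩; exact Quot.sound (.et6 a b)
  left_distrib := by rintro ⟨a⟩ ⟨b⟩ ⟨c⟩; exact Quot.sound (.et9 a b c)
  right_distrib := by
    rintro ⟨a⟩ ⟨b⟩ ⟨c⟩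
    exact (Quot.sound (.et6 _ c)).trans <| (Quot.sound (.et9 c a b)).trans <|
      (Quot.sound (.addLeft _ (.et6 c a))).trans (Quot.sound (.addRight _ (.et6 c b)))
  nsmul := nsmulRec
  npow := npowRec

def const : R →+* FQuotient R where
  toFun r := mk (C r)
  map_zero' := (Quot.sound .etm1).symm
  map_one' := (Quot.sound .et0).symm
  map_add' r s := (Quot.sound (.et1 r s)).symm
  map_mul' r s := (Quot.sound (.et2 r s)).symm

theorem mk_eq_eval₂Hom_psi (t : RingTerm R) :
    mk t = MvPolynomial.eval₂Hom const (fun i => mk (X i)) (psi t) := by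
  induction t with
  | X i => rw [psi, MvPolynomial.eval₂Hom_X']
  | C r => rw [psi, MvPolynomial.eval₂Hom_C]; rfl
  | zero => exact (map_zero _).symm
  | one => exact (map_one _).symm
  | add t u iht ihu => rw [psi, map_add, ← iht, ← ihu]; rfl
  | mul t u iht ihu => rw [psi, map_mul, ← iht, ← ihu]; rfl

end FQuotient

theorem feq_of_psi_eq {t u : RingTerm R} (h : psi t = psi u) : FEq t u :=
  Quot.eqvGen_exact <| by
    rw [← FQuotient.mk, FQuotient.mk_eq_eval₂Hom_psi, h, ← FQuotient.mk_eq_eval₂Hom_psi]; rfl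

section

omit [CommRing R]

noncomputable def varDegree : RingTerm R → ℕ →₀ ℕ
  | X j => Finsupp.single j 1
  | add t u | mul t u => varDegree t + varDegree u
  | _ => 0

theorem varDegree_apply (t : RingTerm R) (i : ℕ) : varDegree t i = varCount t i := by
  induction t with
  | X j => simp [varDegree, varCount, Finsupp.single_apply]
  | add t u iht ihu | mul t u iht ihu => simp [varDegree, varCount, iht, ihu]
  | _ => rfl

end

theorem psi_of_mulOnly {t : RingTerm R} (h : MulOnly t) :
    psi t = MvPolynomial.monomial (varDegree t) 1 := by
  induction t with
  | X j => rfl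
  | mul t u iht ihu => rw [psi, iht h.1, ihu h.2, MvPolynomial.monomial_mul, one_mul]; rfl
  | _ => exact h.elim

theorem psi_of_isMonomial {m : ℕ →₀ ℕ} {μ : RingTerm R} (h : IsMonomial m μ) :
    psi μ = MvPolynomial.monomial m 1 := by
  rcases h with ⟨rfl, rfl⟩ | ⟨hμ, hm⟩
  · rfl
  · rw [psi_of_mulOnly hμ, Finsupp.ext fun i => (varDegree_apply μ i).trans (hm i)]

theorem psi_of_isSumOfPos {l : Multiset (RingTerm R)} {s : RingTerm R} (h : IsSumOfPos l s) :
    psi s = (l.map psi).sum := by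
  induction h with
  | single t => simp
  | add _ _ ih ih' => rw [psi, ih, ih', Multiset.map_add, Multiset.sum_add]

theorem psi_of_isSumOf {l : Multiset (RingTerm R)} {s : RingTerm R} (h : IsSumOf l s) :
    psi s = (l.map psi).sum := by
  rcases h with ⟨rfl, rfl⟩ | h
  · rfl
  · exact psi_of_isSumOfPos h

theorem psi_of_isStandardWithCarrier {t : RingTerm R} {p : MvPolynomial ℕ R}
    (h : IsStandardWithCarrier t p) : psi t = p := by
  obtain ⟨N, r, m, μ, -, -, hμ, ht, rfl⟩ := h
  rw [psi_of_isSumOf ht, Multiset.map_map]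
  refine Finset.sum_congr rfl fun i _ => ?_
  rw [Function.comp_apply, psi, psi_of_isMonomial (hμ i), psi, MvPolynomial.C_mul_monomial,
    mul_one]

end RingTerm

open RingTerm in
/-- two standard ring terms with the same carrier are
f-equivalent. -/
theorem standard_same_carrier_feq {R : Type*} [CommRing R]
    (t u : RingTerm R) (p : MvPolynomial ℕ R)
    (ht : IsStandardWithCarrier t p) (hu : IsStandardWithCarrier u p) :
    FEq t u :=
  feq_of_psi_eq ((psi_of_isStandardWithCarrier ht).trans (psi_of_isStandardWithCarrier hu).symm)
end

section
/- Let R be a commutative ring. Two ring terms t and u over R are s-equivalent (Ψ t = Ψ u in MvPolynomial ℕ R) if and only if they are f-equivalent (t can be transformed into u by a finite series of elementary transformations ET−1 through ET10 applied to subterms). -/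
namespace RingTerm



variable {R : Type*} [CommRing R]

lemma frel {t u : RingTerm R} (h : Step t u) : FEq t u := Relation.EqvGen.rel _ _ h

lemma FEq.refl (t : RingTerm R) : FEq t t := Relation.EqvGen.refl t

lemma FEq.symm' {t u : RingTerm R} (h : FEq t u) : FEq u t := Relation.EqvGen.symm _ _ h

lemma FEq.trans' {t u v : RingTerm R} (h : FEq t u) (h' : FEq u v) : FEq t v :=
  Relation.EqvGen.trans _ _ _ h h'

lemma FEq.addLeft {t t' : RingTerm R} (u : RingTerm R) (h : FEq t t') :
    FEq (add t u) (add t' u) := by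
  induction h with
  | rel a b hab => exact frel (Step.addLeft u hab)
  | refl a => exact FEq.refl _
  | symm a b _ ih => exact ih.symm'
  | trans a b c _ _ ih1 ih2 => exact ih1.trans' ih2

lemma FEq.addRight (u : RingTerm R) {t t' : RingTerm R} (h : FEq t t') :
    FEq (add u t) (add u t') := by
  induction h with
  | rel a b hab => exact frel (Step.addRight u hab)
  | refl a => exact FEq.refl _
  | symm a b _ ih => exact ih.symm'
  | trans a b c _ _ ih1 ih2 => exact ih1.trans' ih2

lemma FEq.mulLeft {t t' : RingTerm R} (u : RingTerm R) (h : FEq t t') :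
    FEq (mul t u) (mul t' u) := by
  induction h with
  | rel a b hab => exact frel (Step.mulLeft u hab)
  | refl a => exact FEq.refl _
  | symm a b _ ih => exact ih.symm'
  | trans a b c _ _ ih1 ih2 => exact ih1.trans' ih2

lemma FEq.mulRight (u : RingTerm R) {t t' : RingTerm R} (h : FEq t t') :
    FEq (mul u t) (mul u t') := by
  induction h with
  | rel a b hab => exact frel (Step.mulRight u hab)
  | refl a => exact FEq.refl _
  | symm a b _ ih => exact ih.symm'
  | trans a b c _ _ ih1 ih2 => exact ih1.trans' ih2

lemma FEq.add {t t' u u' : RingTerm R} (h : FEq t t') (h' : FEq u u') :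
    FEq (add t u) (add t' u') := (FEq.addLeft u h).trans' (FEq.addRight t' h')

lemma FEq.mul {t t' u u' : RingTerm R} (h : FEq t t') (h' : FEq u u') :
    FEq (mul t u) (mul t' u') := (FEq.mulLeft u h).trans' (FEq.mulRight t' h')

instance feqSetoid (R : Type*) [CommRing R] : Setoid (RingTerm R) :=
  ⟨FEq, Relation.EqvGen.is_equivalence _⟩

abbrev Q (R : Type*) [CommRing R] := Quotient (feqSetoid R)

def mk (t : RingTerm R) : Q R := Quotient.mk _ t

lemma mk_eq_of_feq {t u : RingTerm R} (h : FEq t u) : mk t = mk u := Quotient.sound h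

def qadd : Q R → Q R → Q R :=
  Quotient.lift₂ (fun a b => mk (add a b)) fun _ _ _ _ h h' =>
    mk_eq_of_feq (FEq.add h h')

def qmul : Q R → Q R → Q R :=
  Quotient.lift₂ (fun a b => mk (mul a b)) fun _ _ _ _ h h' =>
    mk_eq_of_feq (FEq.mul h h')

def qneg : Q R → Q R :=
  Quotient.lift (fun a => mk (mul (C (-1)) a)) fun _ _ h =>
    mk_eq_of_feq (FEq.mulRight _ h)

-- key FEq chain for neg_add_cancel : C(-1)*a + a ~ zero
lemma neg_chain (a : RingTerm R) : FEq (add (mul (C (-1)) a) a) RingTerm.zero := by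
  have h1 : FEq (add (mul (C (-1)) a) a) (add (mul (C (-1)) a) (mul (C 1) a)) :=
    FEq.addRight _ ((frel (Step.et4 a)).symm'.trans'
      (FEq.mulLeft a (frel Step.et0)))
  have h2 : FEq (add (mul (C (-1)) a) (mul (C 1) a))
      (add (mul a (C (-1))) (mul a (C 1))) :=
    FEq.add (frel (Step.et6 _ _)) (frel (Step.et6 _ _))
  have h3 : FEq (add (mul a (C (-1))) (mul a (C 1)))
      (mul a (add (C (-1)) (C 1))) := (frel (Step.et9 a _ _)).symm'
  have h4 : FEq (mul a (add (C (-1)) (C 1))) (mul a (C 0)) := by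
    have := frel (R := R) (Step.et1 (-1) 1)
    rw [neg_add_cancel] at this
    exact FEq.mulRight a this
  have h5 : FEq (mul a (C 0)) (mul RingTerm.zero a) :=
    (frel (Step.et6 _ _)).trans' (FEq.mulLeft a (frel Step.etm1).symm')
  exact ((((h1.trans' h2).trans' h3).trans' h4).trans' h5).trans'
    (frel (Step.et10 a))

instance : Zero (Q R) := ⟨mk RingTerm.zero⟩
instance : One (Q R) := ⟨mk RingTerm.one⟩
instance : Add (Q R) := ⟨qadd⟩
instance : Mul (Q R) := ⟨qmul⟩
instance : Neg (Q R) := ⟨qneg⟩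

noncomputable instance : CommRing (Q R) where
  add := qadd
  mul := qmul
  neg := qneg
  zero := mk RingTerm.zero
  one := mk RingTerm.one
  add_assoc a b c := by
    induction a using Quotient.ind
    induction b using Quotient.ind
    induction c using Quotient.ind
    exact mk_eq_of_feq (frel (Step.et7 _ _ _)).symm'
  zero_add a := by
    induction a using Quotient.ind
    exact mk_eq_of_feq (frel (Step.et3 _))
  add_zero a := by
    induction a using Quotient.ind
    exact mk_eq_of_feq ((frel (Step.et5 _ _)).trans' (frel (Step.et3 _)))
  add_comm a b := by
    induction a using Quotient.ind
    induction b using Quotient.ind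
    exact mk_eq_of_feq (frel (Step.et5 _ _))
  mul_assoc a b c := by
    induction a using Quotient.ind
    induction b using Quotient.ind
    induction c using Quotient.ind
    exact mk_eq_of_feq (frel (Step.et8 _ _ _)).symm'
  one_mul a := by
    induction a using Quotient.ind
    exact mk_eq_of_feq (frel (Step.et4 _))
  mul_one a := by
    induction a using Quotient.ind
    exact mk_eq_of_feq ((frel (Step.et6 _ _)).trans' (frel (Step.et4 _)))
  mul_comm a b := by
    induction a using Quotient.ind
    induction b using Quotient.ind
    exact mk_eq_of_feq (frel (Step.et6 _ _))
  left_distrib a b c := by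
    induction a using Quotient.ind
    induction b using Quotient.ind
    induction c using Quotient.ind
    exact mk_eq_of_feq (frel (Step.et9 _ _ _))
  right_distrib a b c := by
    induction a using Quotient.ind
    induction b using Quotient.ind
    induction c using Quotient.ind
    refine mk_eq_of_feq (((frel (Step.et6 _ _)).trans'
      (frel (Step.et9 _ _ _))).trans' ?_)
    exact FEq.add (frel (Step.et6 _ _)) (frel (Step.et6 _ _))
  zero_mul a := by
    induction a using Quotient.ind
    exact mk_eq_of_feq (frel (Step.et10 _))
  mul_zero a := by
    induction a using Quotient.ind
    exact mk_eq_of_feq ((frel (Step.et6 _ _)).trans' (frel (Step.et10 _)))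
  neg_add_cancel a := by
    induction a using Quotient.ind
    exact mk_eq_of_feq (neg_chain _)
  nsmul := nsmulRec
  nsmul_zero := fun _ => rfl
  nsmul_succ := fun _ _ => rfl
  zsmul := zsmulRec
  zsmul_zero' := fun _ => rfl
  zsmul_succ' := fun _ _ => rfl
  zsmul_neg' := fun _ _ => rfl

lemma mk_add (a b : RingTerm R) : mk (add a b) = mk a + mk b := rfl
lemma mk_mul (a b : RingTerm R) : mk (mul a b) = mk a * mk b := rfl
lemma mk_zero : (mk RingTerm.zero : Q R) = 0 := rfl
lemma mk_one : (mk RingTerm.one : Q R) = 1 := rfl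

/-- `r ↦ [C r]` as a ring hom. -/
noncomputable def Cbar : R →+* Q R where
  toFun r := mk (C r)
  map_one' := (mk_eq_of_feq (frel Step.et0)).symm
  map_mul' r s := (mk_eq_of_feq (frel (Step.et2 r s))).symm
  map_zero' := (mk_eq_of_feq (frel Step.etm1)).symm
  map_add' r s := (mk_eq_of_feq (frel (Step.et1 r s))).symm

noncomputable def phi : MvPolynomial ℕ R →+* Q R :=
  MvPolynomial.eval₂Hom Cbar (fun i => mk (X i))

lemma phi_psi (t : RingTerm R) : phi (psi t) = mk t := by
  induction t with
  | X i => simp [psi, phi]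
  | C r => simp [psi, phi]; rfl
  | zero => simp [psi, phi, ← mk_zero]
  | one => simp [psi, phi, ← mk_one]
  | add a b iha ihb => simp [psi, map_add, iha, ihb, mk_add]
  | mul a b iha ihb => simp [psi, map_mul, iha, ihb, mk_mul]

lemma step_psi {t u : RingTerm R} (h : Step t u) : psi t = psi u := by
  induction h <;> simp [psi, *] <;> ring

lemma feq_psi {t u : RingTerm R} (h : FEq t u) : psi t = psi u := by
  induction h with
  | rel a b hab => exact step_psi hab
  | refl a => rfl
  | symm a b _ ih => exact ih.symm
  | trans a b c _ _ ih1 ih2 => exact ih1.trans ih2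

end RingTerm

open RingTerm in
/-- two ring terms are s-equivalent (`Ψ t = Ψ u`) iff they are
f-equivalent (related by a series of elementary transformations ET−1…ET10). -/
theorem seq_iff_feq {R : Type*} [CommRing R] (t u : RingTerm R) :
    psi t = psi u ↔ FEq t u := by
  constructor
  · intro h
    have := congrArg RingTerm.phi h
    rw [RingTerm.phi_psi, RingTerm.phi_psi] at this
    exact Quotient.exact this
  · exact RingTerm.feq_psi
end
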